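/- Let X be an Abelian group with orthogonality relation ⊥ satisfying: x ⊥ y implies x ⊥ -y, -x ⊥ y, 2x ⊥ 2y; and for every x there is y with x ⊥ y and x+y ⊥ x-y. Let Y be a complete β-homogeneous F-space (β > 0) and ε ≥ 0. If f : X → Y satisfies ‖f(x+y)-f(x)-f(y)‖ ≤ ε whenever x ⊥ y, then the pointwise limit g(x) = lim_n [((2^n+1)/(2·4^n))f(2^n x) - ((2^n-1)/(2·4^n))f(-2^n x)] exists and satisfies g(x+y) = g(x) + g(y) whenever x ⊥ y. -/

import Mathlib

/-!
Write `e x = f x + f (-x)` and `o x = f x - f (-x)`. For `x` pick `y` with `x ⊥ y` and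
`x + y ⊥ x - y`; the Cauchy differences at `(x, y)`, `(x, -y)` and `(x + y, x - y)` give
`f (2x) ≈ 2 f x + e y` up to `3ε`, and the same at `(-x, -y)` gives `o (2x) ≈ 2 o x` and
`e (2x) ≈ 2 e x + 2 e y`. Exchanging the roles of `x` and `y` gives `e (2x) ≈ e (2y)`, so the
estimate at `(2x, 2y)` becomes `e (4x) ≈ 4 e (2x)`. The `n`-th approximant equals
`e (2ⁿx) / (2·4ⁿ) + o (2ⁿx) / (2·2ⁿ)`, so consecutive approximants differ by `O(ε 2^(-βn))` and
converge in the complete space; on an orthogonal pair their Cauchy difference is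
`O(ε 2^(-βn))` as well, which makes the limit orthogonally additive.
-/

open Filter Topology

section

variable {X Y : Type*} [AddCommGroup X]

section Orthogonality

variable {perp : X → X → Prop}

lemma perp_two_pow_smul (hdouble : ∀ x y, perp x y → perp (2 • x) (2 • y)) (n : ℕ) {x y : X}
    (hxy : perp x y) : perp (2 ^ n • x) (2 ^ n • y) := by
  induction n with
  | zero => simpa using hxy
  | succ n ih => simpa only [pow_succ', mul_smul] using hdouble _ _ ih

lemma perp_neg_neg (hneg : ∀ x y, perp x y → perp x (-y) ∧ perp (-x) y) {x y : X}
    (hxy : perp x y) : perp (-x) (-y) :=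
  (hneg _ _ (hneg _ _ hxy).2).1

end Orthogonality

section Parts

variable [AddCommGroup Y]

def cauchyDiff (f : X → Y) (x y : X) : Y := f (x + y) - f x - f y

def evenPart (f : X → Y) (x : X) : Y := f x + f (-x)

def oddPart (f : X → Y) (x : X) : Y := f x - f (-x)

lemma cauchyDiff_comm (f : X → Y) (x y : X) : cauchyDiff f x y = cauchyDiff f y x := by
  rw [cauchyDiff, cauchyDiff, add_comm x y, sub_right_comm]

lemma evenPart_neg (f : X → Y) (x : X) : evenPart f (-x) = evenPart f x := by
  rw [evenPart, evenPart, neg_neg, add_comm]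

end Parts

section Doubling

variable [SeminormedAddCommGroup Y] {f : X → Y} {ε : ℝ}

lemma norm_map_two_smul_sub_le {x y : X} (h₁ : ‖cauchyDiff f x y‖ ≤ ε)
    (h₂ : ‖cauchyDiff f x (-y)‖ ≤ ε) (h₃ : ‖cauchyDiff f (x + y) (x - y)‖ ≤ ε) :
    ‖f (2 • x) - 2 • f x - evenPart f y‖ ≤ 3 * ε := by
  have h : f (2 • x) - 2 • f x - evenPart f y
      = cauchyDiff f (x + y) (x - y) + cauchyDiff f x y + cauchyDiff f x (-y) := by
    simp only [cauchyDiff, evenPart, two_nsmul, ← sub_eq_add_neg,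
      show x + y + (x - y) = x + x by abel]
    abel
  rw [h]
  exact norm_add₃_le.trans (by linarith)

lemma norm_oddPart_evenPart_two_smul_sub_le {x y : X} {δ : ℝ}
    (h : ‖f (2 • x) - 2 • f x - evenPart f y‖ ≤ δ)
    (h_neg : ‖f (2 • -x) - 2 • f (-x) - evenPart f (-y)‖ ≤ δ) :
    ‖oddPart f (2 • x) - 2 • oddPart f x‖ ≤ 2 * δ ∧
      ‖evenPart f (2 • x) - 2 • evenPart f x - 2 • evenPart f y‖ ≤ 2 * δ := by
  rw [evenPart_neg, smul_neg] at h_neg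
  constructor
  · have e : oddPart f (2 • x) - 2 • oddPart f x
        = (f (2 • x) - 2 • f x - evenPart f y) - (f (-(2 • x)) - 2 • f (-x) - evenPart f y) := by
      simp only [oddPart, smul_sub]; abel
    rw [e]
    exact (norm_sub_le_of_le h h_neg).trans_eq (two_mul δ).symm
  · have e : evenPart f (2 • x) - 2 • evenPart f x - 2 • evenPart f y
        = (f (2 • x) - 2 • f x - evenPart f y) + (f (-(2 • x)) - 2 • f (-x) - evenPart f y) := by
      simp only [evenPart, smul_add, two_nsmul]; abel
    rw [e]
    exact (norm_add_le_of_le h h_neg).trans_eq (two_mul δ).symm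

end Doubling

section OrthogonalDoubling

variable [SeminormedAddCommGroup Y] {f : X → Y} {ε : ℝ} {perp : X → X → Prop}

lemma norm_map_two_smul_sub_le_of_perp (hf : ∀ x y, perp x y → ‖cauchyDiff f x y‖ ≤ ε)
    (hneg : ∀ x y, perp x y → perp x (-y) ∧ perp (-x) y) {x y : X}
    (hxy : perp x y) (hs : perp (x + y) (x - y)) :
    ‖f (2 • x) - 2 • f x - evenPart f y‖ ≤ 3 * ε ∧
      ‖f (2 • y) - 2 • f y - evenPart f x‖ ≤ 3 * ε := by
  refine ⟨norm_map_two_smul_sub_le (hf _ _ hxy) (hf _ _ (hneg _ _ hxy).1) (hf _ _ hs),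
    norm_map_two_smul_sub_le ?_ ?_ ?_⟩
  · rw [cauchyDiff_comm]; exact hf _ _ hxy
  · rw [cauchyDiff_comm]; exact hf _ _ (hneg _ _ hxy).2
  · simpa only [add_comm x y, neg_sub] using hf _ _ (hneg _ _ hs).1

lemma norm_doubling_le_of_perp (hf : ∀ x y, perp x y → ‖cauchyDiff f x y‖ ≤ ε)
    (hneg : ∀ x y, perp x y → perp x (-y) ∧ perp (-x) y) {x y : X}
    (hxy : perp x y) (hs : perp (x + y) (x - y)) :
    ‖oddPart f (2 • x) - 2 • oddPart f x‖ ≤ 6 * ε ∧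
      ‖evenPart f (2 • x) - 2 • evenPart f x - 2 • evenPart f y‖ ≤ 6 * ε ∧
      ‖evenPart f (2 • y) - 2 • evenPart f y - 2 • evenPart f x‖ ≤ 6 * ε := by
  have hs' : perp (-x + -y) (-x - -y) := by
    rw [← neg_add, ← neg_sub']
    exact perp_neg_neg hneg hs
  obtain ⟨hx, hy⟩ := norm_map_two_smul_sub_le_of_perp hf hneg hxy hs
  obtain ⟨hx', hy'⟩ := norm_map_two_smul_sub_le_of_perp hf hneg (perp_neg_neg hneg hxy) hs'
  obtain ⟨hodd, hevenx⟩ := norm_oddPart_evenPart_two_smul_sub_le hx hx'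
  obtain ⟨-, heveny⟩ := norm_oddPart_evenPart_two_smul_sub_le hy hy'
  refine ⟨?_, ?_, ?_⟩ <;> linarith

lemma norm_oddPart_two_smul_sub_le (hf : ∀ x y, perp x y → ‖cauchyDiff f x y‖ ≤ ε)
    (hneg : ∀ x y, perp x y → perp x (-y) ∧ perp (-x) y)
    (hex : ∀ x, ∃ y, perp x y ∧ perp (x + y) (x - y)) (x : X) :
    ‖oddPart f (2 • x) - 2 • oddPart f x‖ ≤ 6 * ε := by
  obtain ⟨y, hxy, hs⟩ := hex x
  exact (norm_doubling_le_of_perp hf hneg hxy hs).1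

lemma norm_evenPart_four_smul_sub_le (hf : ∀ x y, perp x y → ‖cauchyDiff f x y‖ ≤ ε)
    (hneg : ∀ x y, perp x y → perp x (-y) ∧ perp (-x) y)
    (hdouble : ∀ x y, perp x y → perp (2 • x) (2 • y))
    (hex : ∀ x, ∃ y, perp x y ∧ perp (x + y) (x - y)) (x : X) :
    ‖evenPart f (4 • x) - 4 • evenPart f (2 • x)‖ ≤ 30 * ε := by
  obtain ⟨y, hxy, hs⟩ := hex x
  obtain ⟨-, hx, hy⟩ := norm_doubling_le_of_perp hf hneg hxy hs
  have hs₂ : perp (2 • x + 2 • y) (2 • x - 2 • y) := by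
    simpa only [smul_add, smul_sub] using hdouble _ _ hs
  obtain ⟨-, hx₂, -⟩ := norm_doubling_le_of_perp hf hneg (hdouble _ _ hxy) hs₂
  have e : evenPart f (4 • x) - 4 • evenPart f (2 • x)
      = (evenPart f (2 • 2 • x) - 2 • evenPart f (2 • x) - 2 • evenPart f (2 • y))
        + 2 • ((evenPart f (2 • y) - 2 • evenPart f y - 2 • evenPart f x)
          - (evenPart f (2 • x) - 2 • evenPart f x - 2 • evenPart f y)) := by
    rw [smul_smul]; module
  rw [e]
  calc _ ≤ _ := norm_add_le _ _
    _ ≤ 6 * ε + 2 * (6 * ε + 6 * ε) := by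
      gcongr
      exact norm_nsmul_le.trans <| by
        rw [Nat.cast_ofNat]; exact mul_le_mul_of_nonneg_left (norm_sub_le_of_le hy hx) two_pos.le
    _ = 30 * ε := by ring

end OrthogonalDoubling

section Approximation

variable [SeminormedAddCommGroup Y] [Module ℝ Y] {β : ℝ}

noncomputable def approxSeq (f : X → Y) (n : ℕ) (x : X) : Y :=
  (((2 : ℝ) ^ n + 1) / (2 * (4 : ℝ) ^ n)) • f (2 ^ n • x)
    - (((2 : ℝ) ^ n - 1) / (2 * (4 : ℝ) ^ n)) • f (-(2 ^ n • x))

lemma approxSeq_eq (f : X → Y) (n : ℕ) (x : X) :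
    approxSeq f n x = (2 * (4 : ℝ) ^ n)⁻¹ • evenPart f (2 ^ n • x)
      + (2 * (2 : ℝ) ^ n)⁻¹ • oddPart f (2 ^ n • x) := by
  have h4 : (4 : ℝ) ^ n = 2 ^ n * 2 ^ n := by rw [← mul_pow]; norm_num
  have ha : ((2 : ℝ) ^ n + 1) / (2 * 4 ^ n) = (2 * 4 ^ n)⁻¹ + (2 * 2 ^ n)⁻¹ := by
    rw [h4]; field_simp; ring
  have hb : ((2 : ℝ) ^ n - 1) / (2 * 4 ^ n) = (2 * 2 ^ n)⁻¹ - (2 * 4 ^ n)⁻¹ := by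
    rw [h4]; field_simp
  rw [approxSeq, ha, hb, evenPart, oddPart]
  module

lemma approxSeq_succ_sub (f : X → Y) (n : ℕ) (x : X) :
    approxSeq f (n + 1) x - approxSeq f n x
      = (2 * (4 : ℝ) ^ (n + 1))⁻¹ • (evenPart f (2 • 2 ^ n • x) - 4 • evenPart f (2 ^ n • x))
        + (2 * (2 : ℝ) ^ (n + 1))⁻¹ • (oddPart f (2 • 2 ^ n • x) - 2 • oddPart f (2 ^ n • x)) := by
  rw [approxSeq_eq, approxSeq_eq, pow_succ' 2 n, mul_smul]
  module

lemma cauchyDiff_approxSeq (f : X → Y) (n : ℕ) (x y : X) :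
    cauchyDiff (approxSeq f n) x y
      = (((2 : ℝ) ^ n + 1) / (2 * (4 : ℝ) ^ n)) • cauchyDiff f (2 ^ n • x) (2 ^ n • y)
        - (((2 : ℝ) ^ n - 1) / (2 * (4 : ℝ) ^ n)) •
          cauchyDiff f (-(2 ^ n • x)) (-(2 ^ n • y)) := by
  simp only [cauchyDiff, approxSeq, smul_add, neg_add]
  module

lemma norm_smul_le_of_le_inv_two_pow (hhom : ∀ (t : ℝ) (v : Y), ‖t • v‖ = |t| ^ β * ‖v‖)
    (hβ : 0 ≤ β) {t : ℝ} {n : ℕ} (ht₀ : 0 ≤ t) (ht : t ≤ (2 ^ n)⁻¹) (v : Y) :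
    ‖t • v‖ ≤ ((2 : ℝ)⁻¹ ^ β) ^ n * ‖v‖ := by
  rw [hhom, abs_of_nonneg ht₀, Real.rpow_pow_comm (by norm_num), inv_pow]
  gcongr

lemma norm_approxSeq_succ_sub_le (hhom : ∀ (t : ℝ) (v : Y), ‖t • v‖ = |t| ^ β * ‖v‖)
    (hβ : 0 ≤ β) {f : X → Y} {ε : ℝ}
    (hodd : ∀ x, ‖oddPart f (2 • x) - 2 • oddPart f x‖ ≤ 6 * ε)
    (heven : ∀ x, ‖evenPart f (4 • x) - 4 • evenPart f (2 • x)‖ ≤ 30 * ε) (n : ℕ) (x : X) :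
    ‖approxSeq f (n + 2) x - approxSeq f (n + 1) x‖ ≤ 36 * ε * ((2 : ℝ)⁻¹ ^ β) ^ n := by
  have h2 : (2 : ℝ) ^ n ≤ 2 * 2 ^ (n + 2) := by
    rw [pow_add]; linarith [pow_pos (two_pos : (0 : ℝ) < 2) n]
  have h4 : (2 : ℝ) ^ n ≤ 2 * 4 ^ (n + 2) := by
    refine h2.trans ?_
    gcongr; norm_num
  rw [approxSeq_succ_sub, pow_succ' 2 n, mul_smul]
  refine (norm_add_le _ _).trans ?_
  calc _ ≤ ((2 : ℝ)⁻¹ ^ β) ^ n * (30 * ε) + ((2 : ℝ)⁻¹ ^ β) ^ n * (6 * ε) := by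
        gcongr
        · refine (norm_smul_le_of_le_inv_two_pow hhom hβ (by positivity)
            (inv_anti₀ (by positivity) h4) _).trans ?_
          gcongr
          rw [smul_smul]
          exact heven _
        · refine (norm_smul_le_of_le_inv_two_pow hhom hβ (by positivity)
            (inv_anti₀ (by positivity) h2) _).trans ?_
          gcongr
          exact hodd _
    _ = 36 * ε * ((2 : ℝ)⁻¹ ^ β) ^ n := by ring

lemma norm_cauchyDiff_approxSeq_le (hhom : ∀ (t : ℝ) (v : Y), ‖t • v‖ = |t| ^ β * ‖v‖)
    (hβ : 0 ≤ β) {f : X → Y} {ε : ℝ} {n : ℕ} {x y : X}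
    (h : ‖cauchyDiff f (2 ^ n • x) (2 ^ n • y)‖ ≤ ε)
    (h_neg : ‖cauchyDiff f (-(2 ^ n • x)) (-(2 ^ n • y))‖ ≤ ε) :
    ‖cauchyDiff (approxSeq f n) x y‖ ≤ 2 * ε * ((2 : ℝ)⁻¹ ^ β) ^ n := by
  have h1 : (1 : ℝ) ≤ 2 ^ n := one_le_pow₀ one_le_two
  have h4 : (4 : ℝ) ^ n = 2 ^ n * 2 ^ n := by rw [← mul_pow]; norm_num
  have hcoeff : ∀ c : ℝ, c ≤ 1 → (2 ^ n + c) / (2 * 4 ^ n) ≤ (2 ^ n)⁻¹ := by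
    intro c hc
    rw [h4, div_le_iff₀ (by positivity)]
    field_simp
    linarith
  rw [cauchyDiff_approxSeq, sub_eq_add_neg (2 ^ n : ℝ)]
  refine (norm_sub_le _ _).trans ?_
  calc _ ≤ ((2 : ℝ)⁻¹ ^ β) ^ n * ε + ((2 : ℝ)⁻¹ ^ β) ^ n * ε := by
        gcongr
        · exact (norm_smul_le_of_le_inv_two_pow hhom hβ (by positivity)
            (hcoeff 1 le_rfl) _).trans (by gcongr)
        · exact (norm_smul_le_of_le_inv_two_pow hhom hβ
            (div_nonneg (by linarith) (by positivity)) (hcoeff (-1) (by norm_num)) _).trans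
            (by gcongr)
    _ = 2 * ε * ((2 : ℝ)⁻¹ ^ β) ^ n := by ring

end Approximation

theorem exists_tendsto_approxSeq_and_map_add_of_perp [NormedAddCommGroup Y] [CompleteSpace Y]
    [Module ℝ Y] {perp : X → X → Prop}
    (hperp : ∀ x y, perp x y → perp x (-y) ∧ perp (-x) y ∧ perp (2 • x) (2 • y))
    (hex : ∀ x, ∃ y, perp x y ∧ perp (x + y) (x - y)) {β : ℝ} (hβ : 0 < β)
    (hhom : ∀ (t : ℝ) (v : Y), ‖t • v‖ = |t| ^ β * ‖v‖) {ε : ℝ} {f : X → Y}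
    (hf : ∀ x y, perp x y → ‖cauchyDiff f x y‖ ≤ ε) :
    ∃ g : X → Y, (∀ x, Tendsto (fun n ↦ approxSeq f n x) atTop (𝓝 (g x))) ∧
      ∀ x y, perp x y → g (x + y) = g x + g y := by
  have hneg x y (h : perp x y) : perp x (-y) ∧ perp (-x) y := ⟨(hperp x y h).1, (hperp x y h).2.1⟩
  have hdouble x y (h : perp x y) : perp (2 • x) (2 • y) := (hperp x y h).2.2
  set r : ℝ := (2 : ℝ)⁻¹ ^ β
  have hr₀ : 0 ≤ r := by positivity
  have hr₁ : r < 1 := Real.rpow_lt_one (by norm_num) (by norm_num) hβ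
  -- shifted by one: the even-part estimate only controls `e (4x) - 4 e (2x)`
  have hcauchy x : CauchySeq (fun n ↦ approxSeq f (n + 1) x) :=
    cauchySeq_of_le_geometric r (36 * ε) hr₁ fun n ↦ by
      rw [dist_comm, dist_eq_norm]
      exact norm_approxSeq_succ_sub_le hhom hβ.le (norm_oddPart_two_smul_sub_le hf hneg hex)
        (norm_evenPart_four_smul_sub_le hf hneg hdouble hex) n x
  choose g hg using fun x ↦ cauchySeq_tendsto_of_complete (hcauchy x)
  replace hg x : Tendsto (fun n ↦ approxSeq f n x) atTop (𝓝 (g x)) :=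
    (tendsto_add_atTop_iff_nat 1).1 (hg x)
  refine ⟨g, hg, fun x y hxy ↦ ?_⟩
  have hpow n : perp (2 ^ n • x) (2 ^ n • y) := perp_two_pow_smul hdouble n hxy
  have hzero : Tendsto (fun n ↦ cauchyDiff (approxSeq f n) x y) atTop (𝓝 0) := by
    refine squeeze_zero_norm (fun n ↦ norm_cauchyDiff_approxSeq_le hhom hβ.le (hf _ _ (hpow n))
      (hf _ _ (perp_neg_neg hneg (hpow n)))) ?_
    simpa using (tendsto_pow_atTop_nhds_zero_of_lt_one hr₀ hr₁).const_mul (2 * ε)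
  have hlim : Tendsto (fun n ↦ cauchyDiff (approxSeq f n) x y) atTop
      (𝓝 (g (x + y) - g x - g y)) := ((hg (x + y)).sub (hg x)).sub (hg y)
  rw [← sub_eq_zero, ← sub_sub]
  exact tendsto_nhds_unique hlim hzero

def AddGroupNorm.ofRpowHomogeneous [AddCommGroup Y] [Module ℝ Y] {β : ℝ} (N : Y → ℝ)
    (hN0 : ∀ y, N y = 0 ↔ y = 0) (htri : ∀ y z, N (y + z) ≤ N y + N z)
    (hhom : ∀ (t : ℝ) (y : Y), N (t • y) = |t| ^ β * N y) : AddGroupNorm Y where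
  toFun := N
  map_zero' := (hN0 0).2 rfl
  add_le' := htri
  neg' y := by simpa using hhom (-1) y
  eq_zero_of_map_eq_zero' y := (hN0 y).1

end

theorem stmt5_general {X Y : Type*} [AddCommGroup X] [AddCommGroup Y] [Module ℝ Y]
    (perp : X → X → Prop)
    (hperp1 : ∀ x y, perp x y → perp x (-y) ∧ perp (-x) y ∧ perp (2 • x) (2 • y))
    (hperp2 : ∀ x : X, ∃ y : X, perp x y ∧ perp (x + y) (x - y))
    (β : ℝ) (hβ : 0 < β)
    (N : Y → ℝ)
    (hN0 : ∀ y : Y, N y = 0 ↔ y = 0)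
    (htri : ∀ y z : Y, N (y + z) ≤ N y + N z)
    (hhom : ∀ (t : ℝ) (y : Y), N (t • y) = |t| ^ β * N y)
    (hcomp : ∀ u : ℕ → Y,
      (∀ δ > (0 : ℝ), ∃ M : ℕ, ∀ m n, M ≤ m → M ≤ n → N (u m - u n) < δ) →
      ∃ l : Y, ∀ δ > (0 : ℝ), ∃ M : ℕ, ∀ n, M ≤ n → N (u n - l) < δ)
    (ε : ℝ)
    (f : X → Y)
    (hf : ∀ x y, perp x y → N (f (x + y) - f x - f y) ≤ ε) :
    ∃ g : X → Y,
      (∀ x : X, ∀ δ > (0 : ℝ), ∃ M : ℕ, ∀ n, M ≤ n →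
        N ((((2 : ℝ) ^ n + 1) / (2 * (4 : ℝ) ^ n)) • f (2 ^ n • x)
          - (((2 : ℝ) ^ n - 1) / (2 * (4 : ℝ) ^ n)) • f (-(2 ^ n • x)) - g x) < δ) ∧
      (∀ x y, perp x y → g (x + y) = g x + g y) := by
  let _ : NormedAddCommGroup Y :=
    (AddGroupNorm.ofRpowHomogeneous N hN0 htri hhom).toNormedAddCommGroup
  have hdist (a b : Y) : dist a b = N (a - b) := dist_eq_norm a b
  have _ : CompleteSpace Y := Metric.complete_of_cauchySeq_tendsto fun u hu ↦ by
    simp only [Metric.cauchySeq_iff, Metric.tendsto_atTop, hdist] at hu ⊢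
    exact hcomp u fun δ hδ ↦ (hu δ hδ).imp fun _ hM m n hm hn ↦ hM m hm n hn
  obtain ⟨g, hg, hadd⟩ := exists_tendsto_approxSeq_and_map_add_of_perp hperp1 hperp2 hβ hhom hf
  refine ⟨g, fun x ↦ ?_, hadd⟩
  simpa only [Metric.tendsto_atTop, hdist, approxSeq, ge_iff_le] using hg x

theorem stmt5 {X Y : Type*} [AddCommGroup X] [AddCommGroup Y] [Module ℝ Y]
    (perp : X → X → Prop)
    (hperp1 : ∀ x y, perp x y → perp x (-y) ∧ perp (-x) y ∧ perp (2 • x) (2 • y))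
    (hperp2 : ∀ x : X, ∃ y : X, perp x y ∧ perp (x + y) (x - y))
    (β : ℝ) (hβ : 0 < β)
    (N : Y → ℝ)
    (hN0 : ∀ y : Y, N y = 0 ↔ y = 0)
    (htri : ∀ y z : Y, N (y + z) ≤ N y + N z)
    (hhom : ∀ (t : ℝ) (y : Y), N (t • y) = |t| ^ β * N y)
    (hcomp : ∀ u : ℕ → Y,
      (∀ δ > (0 : ℝ), ∃ M : ℕ, ∀ m n, M ≤ m → M ≤ n → N (u m - u n) < δ) →
      ∃ l : Y, ∀ δ > (0 : ℝ), ∃ M : ℕ, ∀ n, M ≤ n → N (u n - l) < δ)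
    (ε : ℝ) (hε : 0 ≤ ε)
    (f : X → Y)
    (hf : ∀ x y, perp x y → N (f (x + y) - f x - f y) ≤ ε) :
    ∃ g : X → Y,
      (∀ x : X, ∀ δ > (0 : ℝ), ∃ M : ℕ, ∀ n, M ≤ n →
        N ((((2 : ℝ) ^ n + 1) / (2 * (4 : ℝ) ^ n)) • f (2 ^ n • x)
          - (((2 : ℝ) ^ n - 1) / (2 * (4 : ℝ) ^ n)) • f (-(2 ^ n • x)) - g x) < δ) ∧
      (∀ x y, perp x y → g (x + y) = g x + g y) :=
  stmt5_general perp hperp1 hperp2 β hβ N hN0 htri hhom hcomp ε f hf
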